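/- Let G have adjacency eigenvalues λ₁ ≥ ... ≥ λₙ with Σᵢ λᵢ = 0, exactly k of which are nonnegative, and suppose λ₁ ≥ 2m/n ≥ 0. Then EE(G) ≥ E(G)/2 + e^{2m/n} + (k - 1) - 2m/n. -/

import Mathlib

/-!
Let `P` be the set of nonnegative eigenvalues. Since the eigenvalues sum to zero, `E(G)/2` is the
sum over `P`. Dropping the negative terms of `EE(G)`, bounding `e^λ ≥ λ + 1` on `P \ {λ₁}` and
keeping `e^{λ₁}` leaves `EE(G) ≥ E(G)/2 + (k - 1) + (e^{λ₁} - λ₁)`, and `x ↦ e^x - x` is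
increasing on `[0, ∞)`.
-/

open Finset

theorem Real.exp_sub_self_le_exp_sub_self {a b : ℝ} (hb : 0 ≤ b) (hab : b ≤ a) :
    Real.exp b - b ≤ Real.exp a - a := by
  have hexp : Real.exp b * (a - b) + Real.exp b ≤ Real.exp a := by
    calc Real.exp b * (a - b) + Real.exp b = Real.exp b * (a - b + 1) := by ring
      _ ≤ Real.exp b * Real.exp (a - b) := by gcongr; exact Real.add_one_le_exp _
      _ = Real.exp a := by rw [← Real.exp_add, add_sub_cancel]
  nlinarith [Real.one_le_exp hb]

theorem Finset.sum_abs_eq_two_mul_sum_filter_nonneg {ι : Type*} (s : Finset ι) (f : ι → ℝ)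
    (hsum : ∑ i ∈ s, f i = 0) :
    ∑ i ∈ s, |f i| = 2 * ∑ i ∈ s with 0 ≤ f i, f i := by
  have hpoint : ∀ i, |f i| = 2 * (if 0 ≤ f i then f i else 0) - f i := fun i => by
    split_ifs with h
    · rw [abs_of_nonneg h]; ring
    · rw [abs_of_neg (not_le.mp h)]; ring
  simp only [hpoint, sum_sub_distrib, ← mul_sum, ← sum_filter, hsum, sub_zero]

theorem Finset.exp_sub_self_add_sum_add_card_sub_one_le_sum_exp {ι : Type*} [DecidableEq ι]
    {s : Finset ι} (f : ι → ℝ) {i₀ : ι} (hi₀ : i₀ ∈ s) :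
    Real.exp (f i₀) - f i₀ + ∑ i ∈ s, f i + ((#s : ℝ) - 1) ≤ ∑ i ∈ s, Real.exp (f i) := by
  have hcard : ((#(s.erase i₀) : ℕ) : ℝ) = (#s : ℝ) - 1 := by
    rw [card_erase_of_mem hi₀, Nat.cast_sub (card_pos.mpr ⟨i₀, hi₀⟩), Nat.cast_one]
  calc Real.exp (f i₀) - f i₀ + ∑ i ∈ s, f i + ((#s : ℝ) - 1)
      = Real.exp (f i₀) + ∑ i ∈ s.erase i₀, (f i + 1) := by
        rw [← add_sum_erase s f hi₀, sum_add_distrib, sum_const, nsmul_one, hcard]; ring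
    _ ≤ Real.exp (f i₀) + ∑ i ∈ s.erase i₀, Real.exp (f i) := by
        gcongr with i; exact Real.add_one_le_exp _
    _ = ∑ i ∈ s, Real.exp (f i) := add_sum_erase s (fun i => Real.exp (f i)) hi₀

theorem Finset.sum_exp_ge_of_sum_eq_zero {ι : Type*} [Fintype ι] [DecidableEq ι] (f : ι → ℝ)
    (hsum : ∑ i, f i = 0) {i₀ : ι} {c : ℝ} (hc : 0 ≤ c) (hci₀ : c ≤ f i₀) :
    (∑ i, |f i|) / 2 + Real.exp c + ((#{i | 0 ≤ f i} : ℝ) - 1) - c ≤ ∑ i, Real.exp (f i) := by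
  have hi₀ : i₀ ∈ ({i | 0 ≤ f i} : Finset ι) := by simpa using hc.trans hci₀
  have hdrop : ∑ i with 0 ≤ f i, Real.exp (f i) ≤ ∑ i, Real.exp (f i) :=
    sum_le_sum_of_subset_of_nonneg (subset_univ _) fun i _ _ => (Real.exp_pos _).le
  linarith [sum_abs_eq_two_mul_sum_filter_nonneg univ f hsum,
    exp_sub_self_add_sum_add_card_sub_one_le_sum_exp f hi₀,
    Real.exp_sub_self_le_exp_sub_self hc hci₀]

theorem stmt_16_general {n : ℕ} (G : SimpleGraph (Fin n)) [DecidableRel G.Adj]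
    (m : ℕ)
    (hH : (G.adjMatrix ℝ).IsHermitian)
    (hsum : ∑ i, hH.eigenvalues i = 0)
    (i₀ : Fin n)
    (k : ℕ) (hk : k = (Finset.univ.filter (fun i => 0 ≤ hH.eigenvalues i)).card)
    (hlam : hH.eigenvalues i₀ ≥ 2 * (m : ℝ) / n) (h0 : 2 * (m : ℝ) / n ≥ 0) :
    ∑ i, Real.exp (hH.eigenvalues i) ≥
      (∑ i, |hH.eigenvalues i|) / 2 + Real.exp (2 * (m : ℝ) / n) + ((k : ℝ) - 1) -
        2 * (m : ℝ) / n := by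
  subst hk
  exact sum_exp_ge_of_sum_eq_zero hH.eigenvalues hsum h0 hlam

theorem stmt_16 {n : ℕ} (G : SimpleGraph (Fin n)) [DecidableRel G.Adj]
    (m : ℕ) (hm : m = G.edgeFinset.card)
    (hH : (G.adjMatrix ℝ).IsHermitian)
    (hsum : ∑ i, hH.eigenvalues i = 0)
    (i₀ : Fin n) (hmax : ∀ i, hH.eigenvalues i ≤ hH.eigenvalues i₀)
    (k : ℕ) (hk : k = (Finset.univ.filter (fun i => 0 ≤ hH.eigenvalues i)).card)
    (hlam : hH.eigenvalues i₀ ≥ 2 * (m : ℝ) / n) (h0 : 2 * (m : ℝ) / n ≥ 0) :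
    ∑ i, Real.exp (hH.eigenvalues i) ≥
      (∑ i, |hH.eigenvalues i|) / 2 + Real.exp (2 * (m : ℝ) / n) + ((k : ℝ) - 1) -
        2 * (m : ℝ) / n :=
  stmt_16_general G m hH hsum i₀ k hk hlam h0
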